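/- arXiv:1803.01445 — 4 statements merged into one kernel-verified Lean document; each statement's English description precedes it below -/
import Mathlib

section
/- For every cylindric set algebra expression E of dimension n there is a first-order formula φ_E with n variables such that φ_E^I = E(h^n(I)) for all instances I. -/
/-- First-order formulas over a schema of `m` relation symbols with arities `ar`,
using the `n` variables `x_1, …, x_n`. -/
inductive FO (m n : ℕ) (ar : Fin m → ℕ) : Type where
  | rel (p : Fin m) (v : Fin (ar p) → Fin n)
  | eq (i j : Fin n)
  | and (φ ψ : FO m n ar)
  | or (φ ψ : FO m n ar)
  | not (φ : FO m n ar)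
  | ex (i : Fin n) (φ : FO m n ar)
  | all (i : Fin n) (φ : FO m n ar)

/-- Satisfaction `I ⊨_ν φ` of an FO formula in a (possibly infinite) instance `I`
under the valuation `ν`. -/
def Sat {D : Type} {m n : ℕ} {ar : Fin m → ℕ}
    (I : ∀ p : Fin m, Set (Fin (ar p) → D)) :
    FO m n ar → (Fin n → D) → Prop
  | .rel p v, ν => (fun l => ν (v l)) ∈ I p
  | .eq i j, ν => ν i = ν j
  | .and φ ψ, ν => Sat I φ ν ∧ Sat I ψ ν
  | .or φ ψ, ν => Sat I φ ν ∨ Sat I ψ ν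
  | .not φ, ν => ¬ Sat I φ ν
  | .ex i φ, ν => ∃ a : D, Sat I φ (Function.update ν i a)
  | .all i φ, ν => ∀ a : D, Sat I φ (Function.update ν i a)

/-- The free variables of an FO formula. -/
def freeVars {m n : ℕ} {ar : Fin m → ℕ} : FO m n ar → Finset (Fin n)
  | .rel _ v => Finset.univ.image v
  | .eq i j => {i, j}
  | .and φ ψ => freeVars φ ∪ freeVars ψ
  | .or φ ψ => freeVars φ ∪ freeVars ψ
  | .not φ => freeVars φ
  | .ex i φ => freeVars φ \ {i}
  | .all i φ => freeVars φ \ {i}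

/-- Cylindric set algebra expressions of dimension `n`: atomic cylinders `C_p`,
diagonals `d_{ij}`, closed under union, intersection, complement, and outer and
inner cylindrification. -/
inductive CA (m n : ℕ) : Type where
  | base (p : Fin m)
  | diag (i j : Fin n)
  | union (E F : CA m n)
  | inter (E F : CA m n)
  | compl (E : CA m n)
  | cyl (i : Fin n) (E : CA m n)
  | icyl (i : Fin n) (E : CA m n)

/-- Value of a CA expression on the horizontal `n`-expansion of instance `I`
(the expansion `h^n(R_p) = R_p × D^{n-ar p}` is built into the `base` case,
and diagonals interpret equality). -/
def evalCA {D : Type} {m n : ℕ} {ar : Fin m → ℕ} (har : ∀ p, ar p ≤ n)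
    (I : ∀ p : Fin m, Set (Fin (ar p) → D)) : CA m n → Set (Fin n → D)
  | .base p => {t | (fun l => t (Fin.castLE (har p) l)) ∈ I p}
  | .diag i j => {t | t i = t j}
  | .union E F => evalCA har I E ∪ evalCA har I F
  | .inter E F => evalCA har I E ∩ evalCA har I F
  | .compl E => (evalCA har I E)ᶜ
  | .cyl i E => {t | ∃ a : D, Function.update t i a ∈ evalCA har I E}
  | .icyl i E => {t | ∀ a : D, Function.update t i a ∈ evalCA har I E}

/-!
Translate `E` structurally: `C_p` becomes the atom `R_p(x_1, …, x_{ar p})`, `d_{ij}` the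
equation `x_i = x_j`, the Boolean operations the connectives, and outer and inner
cylindrification along `i` the quantifiers `∃ x_i` and `∀ x_i`. Conjoining the result with
the trivial equations `x_i = x_i` makes all `n` variables free without changing its meaning.
-/

namespace FO

variable {m n : ℕ} {ar : Fin m → ℕ}

def withVars (l : List (Fin n)) (φ : FO m n ar) : FO m n ar :=
  l.foldr (fun i ψ => .and (.eq i i) ψ) φ

@[simp]
theorem freeVars_withVars (l : List (Fin n)) (φ : FO m n ar) :
    freeVars (withVars l φ) = l.toFinset ∪ freeVars φ := by
  induction l with
  | nil => simp [withVars]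
  | cons i l ih =>
    simp only [withVars, List.foldr_cons, freeVars] at ih ⊢
    rw [ih, List.toFinset_cons, Finset.pair_eq_singleton, Finset.insert_eq, Finset.union_assoc]

@[simp]
theorem sat_withVars {D : Type} (I : ∀ p : Fin m, Set (Fin (ar p) → D))
    (l : List (Fin n)) (φ : FO m n ar) (ν : Fin n → D) :
    Sat I (withVars l φ) ν ↔ Sat I φ ν := by
  induction l with
  | nil => rfl
  | cons i l ih => exact (and_iff_right rfl).trans ih

end FO

namespace CA

variable {m n : ℕ} {ar : Fin m → ℕ}

def toFO (har : ∀ p, ar p ≤ n) : CA m n → FO m n ar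
  | .base p => .rel p (Fin.castLE (har p))
  | .diag i j => .eq i j
  | .union E F => .or (E.toFO har) (F.toFO har)
  | .inter E F => .and (E.toFO har) (F.toFO har)
  | .compl E => .not (E.toFO har)
  | .cyl i E => .ex i (E.toFO har)
  | .icyl i E => .all i (E.toFO har)

theorem sat_toFO_iff {D : Type} (har : ∀ p, ar p ≤ n) (I : ∀ p : Fin m, Set (Fin (ar p) → D))
    (E : CA m n) (ν : Fin n → D) : Sat I (E.toFO har) ν ↔ ν ∈ evalCA har I E := by
  induction E generalizing ν with
  | base p | diag i j => rfl
  | union E F ihE ihF => exact or_congr (ihE ν) (ihF ν)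
  | inter E F ihE ihF => exact and_congr (ihE ν) (ihF ν)
  | compl E ihE => exact not_congr (ihE ν)
  | cyl i E ihE => exact exists_congr fun a => ihE _
  | icyl i E ihE => exact forall_congr' fun a => ihE _

end CA

theorem ca_to_fo_general (D : Type)
    (m n : ℕ) (ar : Fin m → ℕ) (har : ∀ p, ar p ≤ n) (E : CA m n) :
    ∃ φ : FO m n ar, freeVars φ = Finset.univ ∧
      ∀ I : ∀ p : Fin m, Set (Fin (ar p) → D),
        {ν : Fin n → D | Sat I φ ν} = evalCA har I E :=
  ⟨.withVars (List.finRange n) (E.toFO har), by simp,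
    fun I => Set.ext fun ν => (FO.sat_withVars I _ _ ν).trans (E.sat_toFO_iff har I ν)⟩

/-- For every CA_n expression E there is an FO_n formula φ_E with
φ_E^I = E(h^n(I)) for all instances I.  (The translated formula has all n
variables free, so its answer φ_E^I is exactly its set of satisfying
valuations.) -/
theorem ca_to_fo (D : Type) [Countable D] [Infinite D]
    (m n : ℕ) (ar : Fin m → ℕ) (har : ∀ p, ar p ≤ n) (E : CA m n) :
    ∃ φ : FO m n ar, freeVars φ = Finset.univ ∧
      ∀ I : ∀ p : Fin m, Set (Fin (ar p) → D),
        {ν : Fin n → D | Sat I φ ν} = evalCA har I E :=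
  ca_to_fo_general D m n ar har E
end

section
/- For positive star-cylinders C and D of dimension n (in normal form), the semantic containment ⟦C⟧ ⊆ ⟦D⟧ holds if and only if C ⪯ D, i.e., every star-tuple of C is dominated by some star-tuple of D. -/
/-- Literals appearing in conditions of (extended) star-tuples:
equalities `i = j`, inequalities `i ≠ j`, `i ≠ a` (for a constant `a`),
and falsum. -/
inductive Lit (n : ℕ) (D : Type) : Type where
  | eq : Fin n → Fin n → Lit n D
  | ne : Fin n → Fin n → Lit n D
  | neC : Fin n → D → Lit n D
  | fls : Lit n D

/-- Satisfaction of a literal by an ordinary tuple. -/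
def satLit {n : ℕ} {D : Type} (s : Fin n → D) : Lit n D → Prop
  | .eq i j => s i = s j
  | .ne i j => s i ≠ s j
  | .neC i a => s i ≠ a
  | .fls => False

/-- Satisfaction of a condition (a set of literals). -/
def satCond {n : ℕ} {D : Type} (s : Fin n → D) (θ : Set (Lit n D)) : Prop :=
  ∀ ℓ ∈ θ, satLit s ℓ

/-- An `n`-ary star-tuple: values in `D ∪ {*}` (with `none` = *) together with a
condition (its "(n+1)st column"). -/
abbrev StarTuple (n : ℕ) (D : Type) := (Fin n → Option D) × Set (Lit n D)

/-- An ordinary tuple `s ∈ D^n` is dominated by (represented by) a star-tuple `t`: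
each value of `t` is `*` or the corresponding value of `s`, and `s` satisfies the
condition of `t`. -/
def repOrd {n : ℕ} {D : Type} (s : Fin n → D) (t : StarTuple n D) : Prop :=
  (∀ i, t.1 i = none ∨ t.1 i = some (s i)) ∧ satCond s t.2

/-- The set of ordinary tuples represented by a star-cylinder: `⟦C⟧`. -/
def sem {n : ℕ} {D : Type} (C : Set (StarTuple n D)) : Set (Fin n → D) :=
  {s | ∃ t ∈ C, repOrd s t}

/-- A star-tuple is positive when its condition consists of equalities only. -/
def PositiveTuple {n : ℕ} {D : Type} (t : StarTuple n D) : Prop :=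
  ∀ ℓ ∈ t.2, ∃ i j : Fin n, ℓ = Lit.eq i j

/-- Normal form: the condition is satisfiable, and whenever it entails `i = j`
it contains the literal `i = j` and positions `i` and `j` hold equal values. -/
def NormalForm {n : ℕ} {D : Type} (t : StarTuple n D) : Prop :=
  (∃ s : Fin n → D, satCond s t.2) ∧
    ∀ i j : Fin n, (∀ s : Fin n → D, satCond s t.2 → s i = s j) →
      (Lit.eq i j ∈ t.2 ∧ t.1 i = t.1 j)

/-- The order `x ⪯ y` on `D ∪ {*}`. -/
def preD {D : Type} (x y : Option D) : Prop := x = y ∨ y = none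

/-- How a literal in the condition of a dominating star-tuple constrains the
dominated star-tuple `t` (Definition of domination, extended to all literals). -/
def domLit {n : ℕ} {D : Type} (t : StarTuple n D) : Lit n D → Prop
  | .eq i j =>
      ((t.1 i = none ∧ t.1 j = none) → Lit.eq i j ∈ t.2) ∧
      (¬ (t.1 i = none ∧ t.1 j = none) → t.1 i = t.1 j)
  | .ne i j =>
      ((t.1 i = none ∧ t.1 j = none) → Lit.ne i j ∈ t.2) ∧
      (∀ a : D, t.1 i = some a → t.1 j = none → Lit.neC j a ∈ t.2) ∧
      (∀ a : D, t.1 i = none → t.1 j = some a → Lit.neC i a ∈ t.2) ∧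
      (∀ a b : D, t.1 i = some a → t.1 j = some b → a ≠ b)
  | .neC i a =>
      (t.1 i = none → Lit.neC i a ∈ t.2) ∧ (∀ b : D, t.1 i = some b → b ≠ a)
  | .fls => ¬ ∃ s : Fin n → D, satCond s t.2

/-- Domination `t ⪯ u` of star-tuples: either the condition of `t` is
unsatisfiable, or the values of `u` dominate those of `t` pointwise and every
literal of `u`'s condition is appropriately reflected in `t`. -/
def dom {n : ℕ} {D : Type} (t u : StarTuple n D) : Prop :=
  (¬ ∃ s : Fin n → D, satCond s t.2) ∨
    ((∀ i, preD (t.1 i) (u.1 i)) ∧ ∀ ℓ ∈ u.2, domLit t ℓ)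

/-!
Soundness is a literal-by-literal check. For completeness, fill the `*`-positions of a positive
star-tuple `t` in normal form with fresh values, one per class of positions that the condition of
`t` forces to be equal, and vary these values along a parameter `k ∈ ℕ`. All these generic tuples
lie in `⟦C⟧ ⊆ ⟦C'⟧`, so by pigeonhole two of them, for `k₁ ≠ k₂`, are represented by the same
`u ∈ C'`. A constant of `u` at a `*`-position of `t` would have to equal two distinct fresh values,
and an equality `i = j` of `u` between such positions identifies their fresh values, so the
classes of `i` and `j` agree and normal form puts `i = j` into the condition of `t`: hence `t ⪯ u`.
-/

open Function

section

variable {n : ℕ} {D : Type}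

theorem satLit_of_domLit {s : Fin n → D} {t : StarTuple n D} (hs : repOrd s t) :
    ∀ {ℓ : Lit n D}, domLit t ℓ → satLit s ℓ
  | .eq i j, ⟨hstar, hval⟩ => by
    by_cases hij : t.1 i = none ∧ t.1 j = none
    · exact hs.2 _ (hstar hij)
    · have htij := hval hij
      rcases hs.1 i with hi | hi <;> rcases hs.1 j with hj | hj
      · exact absurd ⟨hi, hj⟩ hij
      all_goals simp_all [satLit]
  | .ne i j, ⟨hstar, hleft, hright, hval⟩ => by
    rcases hs.1 i with hi | hi <;> rcases hs.1 j with hj | hj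
    · exact hs.2 _ (hstar ⟨hi, hj⟩)
    · exact hs.2 (.neC i (s j)) (hright _ hi hj)
    · exact Ne.symm (hs.2 (.neC j (s i)) (hleft _ hi hj))
    · exact hval _ _ hi hj
  | .neC i a, ⟨hstar, hval⟩ => by
    rcases hs.1 i with hi | hi
    · exact hs.2 _ (hstar hi)
    · exact hval _ hi
  | .fls, hunsat => hunsat ⟨s, hs.2⟩

theorem repOrd_of_dom {s : Fin n → D} {t u : StarTuple n D} (hs : repOrd s t) (h : dom t u) :
    repOrd s u := by
  rcases h with hunsat | ⟨hpre, hlit⟩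
  · exact absurd ⟨s, hs.2⟩ hunsat
  refine ⟨fun i => ?_, fun ℓ hℓ => satLit_of_domLit hs (hlit ℓ hℓ)⟩
  rcases hpre i with h | h
  · exact h ▸ hs.1 i
  · exact Or.inl h

theorem sem_subset_of_forall_exists_dom {C C' : Set (StarTuple n D)}
    (h : ∀ t ∈ C, ∃ u ∈ C', dom t u) : sem C ⊆ sem C' := by
  rintro s ⟨t, ht, hs⟩
  obtain ⟨u, hu, htu⟩ := h t ht
  exact ⟨u, hu, repOrd_of_dom hs htu⟩

theorem exists_injective_forall_notMem [Infinite D] {S : Set D} (hS : S.Finite)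
    (α : Type) [Countable α] : ∃ g : α → D, Injective g ∧ ∀ x, g x ∉ S := by
  obtain ⟨f, hf⟩ := Countable.exists_injective_nat α
  let e := hS.infinite_compl.natEmbedding
  exact ⟨fun x => e (f x), fun x y h => hf (e.injective (Subtype.ext h)), fun x => (e (f x)).2⟩

def EntailsEq (t : StarTuple n D) (i j : Fin n) : Prop :=
  ∀ s : Fin n → D, satCond s t.2 → s i = s j

def entailsClass (t : StarTuple n D) (i : Fin n) : Set (Fin n) :=
  {j | EntailsEq t i j}

theorem entailsClass_eq_iff {t : StarTuple n D} {i j : Fin n} :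
    entailsClass t i = entailsClass t j ↔ EntailsEq t i j := by
  constructor
  · intro h
    have hj : j ∈ entailsClass t j := fun _ _ => rfl
    rwa [← h] at hj
  · intro hij
    ext k
    exact ⟨fun hik s hs => (hij s hs).symm.trans (hik s hs),
      fun hjk s hs => (hij s hs).trans (hjk s hs)⟩

def consts (t : StarTuple n D) : Set D :=
  {a | ∃ i, t.1 i = some a}

theorem consts_finite (t : StarTuple n D) : (consts t).Finite :=
  ((Set.finite_range t.1).preimage (Option.some_injective D).injOn).subset
    fun _ ⟨i, hi⟩ => ⟨i, hi⟩

def genericTuple (t : StarTuple n D) (g : Set (Fin n) × ℕ → D) (k : ℕ) : Fin n → D :=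
  fun i => (t.1 i).getD (g (entailsClass t i, k))

variable {t : StarTuple n D} {g : Set (Fin n) × ℕ → D}

theorem genericTuple_of_some {k : ℕ} {i : Fin n} {a : D} (h : t.1 i = some a) :
    genericTuple t g k i = a := by
  simp [genericTuple, h]

theorem repOrd_genericTuple (hpos : PositiveTuple t) (hnf : NormalForm t) (k : ℕ) :
    repOrd (genericTuple t g k) t := by
  refine ⟨fun i => ?_, fun ℓ hℓ => ?_⟩
  · cases h : t.1 i
    · exact Or.inl rfl
    · exact Or.inr (by rw [genericTuple_of_some h])
  · obtain ⟨i, j, rfl⟩ := hpos ℓ hℓ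
    have hij : EntailsEq t i j := fun s hs => hs _ hℓ
    simp only [satLit, genericTuple, (hnf.2 i j hij).2, entailsClass_eq_iff.2 hij]

theorem genericTuple_eq_of_star (hg : Injective g) (hfresh : ∀ x, g x ∉ consts t)
    {k k' : ℕ} {i j : Fin n} (h : genericTuple t g k i = genericTuple t g k' j)
    (hstar : t.1 i = none ∨ t.1 j = none) :
    t.1 i = none ∧ t.1 j = none ∧ EntailsEq t i j ∧ k = k' := by
  cases hi : t.1 i with
  | none =>
    cases hj : t.1 j with
    | none =>
      simp only [genericTuple, hi, hj, Option.getD_none] at h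
      obtain ⟨hcls, hk⟩ := Prod.ext_iff.1 (hg h)
      exact ⟨rfl, rfl, entailsClass_eq_iff.1 hcls, hk⟩
    | some b =>
      simp only [genericTuple, hi, hj, Option.getD_none, Option.getD_some] at h
      exact absurd ⟨j, h ▸ hj⟩ (hfresh _)
  | some a =>
    cases hj : t.1 j with
    | none =>
      simp only [genericTuple, hi, hj, Option.getD_none, Option.getD_some] at h
      exact absurd ⟨i, h ▸ hi⟩ (hfresh _)
    | some b => simp_all

theorem dom_of_repOrd_genericTuple {u : StarTuple n D} (hnf : NormalForm t)
    (hupos : PositiveTuple u) (hg : Injective g) (hfresh : ∀ x, g x ∉ consts t)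
    {k₁ k₂ : ℕ} (hk : k₁ ≠ k₂) (h₁ : repOrd (genericTuple t g k₁) u)
    (h₂ : repOrd (genericTuple t g k₂) u) : dom t u := by
  refine Or.inr ⟨fun i => ?_, fun ℓ hℓ => ?_⟩
  · rcases h₁.1 i with hui | hui
    · exact Or.inr hui
    have hk₁₂ : genericTuple t g k₁ i = genericTuple t g k₂ i := by
      rcases h₂.1 i with h | h <;> simp_all
    cases hti : t.1 i with
    | none => exact absurd (genericTuple_eq_of_star hg hfresh hk₁₂ (.inl hti)).2.2.2 hk
    | some a => exact Or.inl (by rw [hui, genericTuple_of_some hti])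
  · obtain ⟨i, j, rfl⟩ := hupos ℓ hℓ
    have hij : genericTuple t g k₁ i = genericTuple t g k₁ j := h₁.2 _ hℓ
    refine ⟨fun hstar => ?_, fun hnot => ?_⟩
    · exact (hnf.2 i j (genericTuple_eq_of_star hg hfresh hij (.inl hstar.1)).2.2.1).1
    · cases ha : t.1 i with
      | none => exact absurd ⟨ha, (genericTuple_eq_of_star hg hfresh hij (.inl ha)).2.1⟩ hnot
      | some a =>
        cases hb : t.1 j with
        | none => exact absurd (genericTuple_eq_of_star hg hfresh hij (.inr hb)).1 (by simp [ha])
        | some b =>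
          rw [genericTuple_of_some ha, genericTuple_of_some hb] at hij
          rw [hij]

theorem exists_dom_of_forall_repOrd_mem_sem [Infinite D] {C' : Set (StarTuple n D)}
    (hC' : C'.Finite) (hC'pos : ∀ u ∈ C', PositiveTuple u) (hpos : PositiveTuple t)
    (hnf : NormalForm t) (h : ∀ s, repOrd s t → s ∈ sem C') : ∃ u ∈ C', dom t u := by
  obtain ⟨g, hg, hfresh⟩ := exists_injective_forall_notMem (consts_finite t) (Set (Fin n) × ℕ)
  choose u hu hrep using fun k => h _ (repOrd_genericTuple (g := g) hpos hnf k)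
  obtain ⟨k₁, k₂, hlt, heq⟩ := Set.Finite.exists_lt_map_eq_of_forall_mem hu hC'
  exact ⟨u k₁, hu k₁, dom_of_repOrd_genericTuple hnf (hC'pos _ (hu k₁)) hg hfresh hlt.ne
    (hrep k₁) (heq ▸ hrep k₂)⟩

end

theorem sem_subset_iff_dom_general (D : Type) [Infinite D] (n : ℕ)
    (C C' : Set (StarTuple n D)) (hC'fin : C'.Finite)
    (hCpos : ∀ t ∈ C, PositiveTuple t) (hC'pos : ∀ t ∈ C', PositiveTuple t)
    (hCnf : ∀ t ∈ C, NormalForm t) :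
    sem C ⊆ sem C' ↔ ∀ t ∈ C, ∃ u ∈ C', dom t u :=
  ⟨fun hsub t ht => exists_dom_of_forall_repOrd_mem_sem hC'fin hC'pos (hCpos t ht) (hCnf t ht)
      fun _ hs => hsub ⟨t, ht, hs⟩,
    sem_subset_of_forall_exists_dom⟩

/-- For positive star-cylinders C and D in normal form,
⟦C⟧ ⊆ ⟦D⟧ iff C ⪯ D (every star-tuple of C is dominated by one of D). -/
theorem sem_subset_iff_dom (D : Type) [Countable D] [Infinite D] (n : ℕ)
    (C C' : Set (StarTuple n D)) (hCfin : C.Finite) (hC'fin : C'.Finite)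
    (hCpos : ∀ t ∈ C, PositiveTuple t) (hC'pos : ∀ t ∈ C', PositiveTuple t)
    (hCnf : ∀ t ∈ C, NormalForm t) (hC'nf : ∀ t ∈ C', NormalForm t) :
    sem C ⊆ sem C' ↔ ∀ t ∈ C, ∃ u ∈ C', dom t u :=
  sem_subset_iff_dom_general D n C C' hC'fin hCpos hC'pos hCnf
end

section
/- Star-intersection correctly represents intersection: ⟦C ∩̇ D⟧ = ⟦C⟧ ∩ ⟦D⟧, where C ∩̇ D = {t ⋏ u : t ∈ C, u ∈ D} and ⋏ is the meet of star-tuples. -/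
open Classical in
/-- The meet `t ⋏ u` of star-tuples: if the values clash at some position the
result carries the unsatisfiable condition (representing the empty set);
otherwise values are combined (constants win over `*`) and the conditions are
united. -/
noncomputable def meet {n : ℕ} {D : Type} (t u : StarTuple n D) : StarTuple n D :=
  if ∃ (j : Fin n) (a b : D), t.1 j = some a ∧ u.1 j = some b ∧ a ≠ b then
    (t.1, {Lit.fls})
  else
    (fun i => if t.1 i = none then u.1 i else t.1 i, t.2 ∪ u.2)

/-- Star-intersection: `C ∩̇ D = {t ⋏ u : t ∈ C, u ∈ D}`. -/
def starInter {n : ℕ} {D : Type} (C C' : Set (StarTuple n D)) :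
    Set (StarTuple n D) :=
  {x | ∃ t ∈ C, ∃ u ∈ C', x = meet t u}

/-! A tuple `s` is represented by `t ⋏ u` exactly when it is represented by both `t` and `u`:
if `t` and `u` hold different constants at some position, no `s` matches both, and `t ⋏ u`
carries the unsatisfiable condition; otherwise each merged value is a constant of `t` or
of `u` (compatible by the absence of a clash), and the united condition splits. -/

lemma Option.ite_eq_none_or_eq_some_iff {α : Type*} {a b : Option α} {x : α}
    (h : ∀ y z, a = some y → b = some z → y = z) :
    ((if a = none then b else a) = none ∨ (if a = none then b else a) = some x) ↔
      (a = none ∨ a = some x) ∧ (b = none ∨ b = some x) := by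
  cases a <;> cases b <;> grind

namespace StarTuple

variable {n : ℕ} {D : Type}

lemma satCond_union {s : Fin n → D} {θ θ' : Set (Lit n D)} :
    satCond s (θ ∪ θ') ↔ satCond s θ ∧ satCond s θ' := by
  simp only [satCond, Set.mem_union, or_imp, forall_and]

lemma not_satCond_fls (s : Fin n → D) : ¬ satCond s {Lit.fls} :=
  fun h => h Lit.fls rfl

def Clash (t u : StarTuple n D) : Prop :=
  ∃ (j : Fin n) (a b : D), t.1 j = some a ∧ u.1 j = some b ∧ a ≠ b

lemma meet_of_clash {t u : StarTuple n D} (h : Clash t u) :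
    meet t u = (t.1, {Lit.fls}) :=
  if_pos h

lemma meet_of_not_clash {t u : StarTuple n D} (h : ¬ Clash t u) :
    meet t u = (fun i => if t.1 i = none then u.1 i else t.1 i, t.2 ∪ u.2) :=
  if_neg h

lemma not_clash_of_repOrd {s : Fin n → D} {t u : StarTuple n D}
    (ht : repOrd s t) (hu : repOrd s u) : ¬ Clash t u := by
  rintro ⟨j, a, b, hta, hub, hab⟩
  have hta' := ht.1 j
  have hub' := hu.1 j
  simp_all

lemma repOrd_meet_iff {s : Fin n → D} {t u : StarTuple n D} :
    repOrd s (meet t u) ↔ repOrd s t ∧ repOrd s u := by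
  by_cases hc : Clash t u
  · rw [meet_of_clash hc]
    exact iff_of_false (fun h => not_satCond_fls s h.2)
      (fun h => not_clash_of_repOrd h.1 h.2 hc)
  · have hc' : ∀ i y z, t.1 i = some y → u.1 i = some z → y = z :=
      fun i y z hy hz => of_not_not fun hyz => hc ⟨i, y, z, hy, hz, hyz⟩
    simp only [meet_of_not_clash hc, repOrd, satCond_union,
      Option.ite_eq_none_or_eq_some_iff (hc' _), forall_and]
    tauto

end StarTuple

open StarTuple

theorem sem_inter_general (D : Type) (n : ℕ)
    (C C' : Set (StarTuple n D)) :
    sem (starInter C C') = sem C ∩ sem C' := by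
  ext s
  simp only [sem, starInter, Set.mem_inter_iff, Set.mem_ofPred_eq]
  constructor
  · rintro ⟨_, ⟨t, ht, u, hu, rfl⟩, hs⟩
    obtain ⟨hst, hsu⟩ := repOrd_meet_iff.mp hs
    exact ⟨⟨t, ht, hst⟩, ⟨u, hu, hsu⟩⟩
  · rintro ⟨⟨t, ht, hst⟩, ⟨u, hu, hsu⟩⟩
    exact ⟨meet t u, ⟨t, ht, u, hu, rfl⟩, repOrd_meet_iff.mpr ⟨hst, hsu⟩⟩

/-- Star-intersection correctly represents intersection:
⟦C ∩̇ D⟧ = ⟦C⟧ ∩ ⟦D⟧. -/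
theorem sem_inter (D : Type) [Countable D] [Infinite D] (n : ℕ)
    (C C' : Set (StarTuple n D)) (hCfin : C.Finite) (hC'fin : C'.Finite)
    (hCpos : ∀ t ∈ C, PositiveTuple t) (hC'pos : ∀ t ∈ C', PositiveTuple t)
    (hCnf : ∀ t ∈ C, NormalForm t) (hC'nf : ∀ t ∈ C', NormalForm t) :
    sem (starInter C C') = sem C ∩ sem C' :=
  sem_inter_general D n C C'
end

section
/- Positive cylindric set algebra expressions are preserved by possible-world homomorphisms: if C = (C_1,…,C_m, d_{ij}) and D are sequences of naive n-dimensional cylinders (over D ∪ N) with C →_h D for a possible-world homomorphism h, and E is any expression built from the atomic cylinders and diagonals using union, intersection, outer cylindrification, and inner cylindrification (all relativized to the respective universes), then E(C) →_h E(D), i.e., h(E(C)) ⊆ E(D). -/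
/-- A sequence of `m` naive `n`-dimensional cylinders (together with their
diagonals, determined by the universe): the universe satisfies
D ⊆ univ ⊆ D ∪ N (constants `D`, existential nulls `N`), and each cylinder is a
set of `n`-tuples over the universe. -/
structure NaiveSeq (D N : Type) (m n : ℕ) where
  carrier : Set (D ⊕ N)
  const_mem : ∀ d : D, Sum.inl d ∈ carrier
  rel : Fin m → Set (Fin n → D ⊕ N)
  rel_mem : ∀ p, ∀ t ∈ rel p, ∀ i, t i ∈ carrier

/-- Positive cylindric set algebra expressions: atomic cylinders, diagonals,
union, intersection, outer and inner cylindrification (no complement). -/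
inductive PExpr (m n : ℕ) : Type where
  | base (p : Fin m)
  | diag (i j : Fin n)
  | union (E F : PExpr m n)
  | inter (E F : PExpr m n)
  | cyl (i : Fin n) (E : PExpr m n)
  | icyl (i : Fin n) (E : PExpr m n)

/-- Evaluation of a positive expression on a sequence of naive cylinders,
relativized to the universe of the sequence. -/
def evalP {D N : Type} {m n : ℕ} (S : NaiveSeq D N m n) :
    PExpr m n → Set (Fin n → D ⊕ N)
  | .base p => S.rel p
  | .diag i j => {t | (∀ k, t k ∈ S.carrier) ∧ t i = t j}
  | .union E F => evalP S E ∪ evalP S F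
  | .inter E F => evalP S E ∩ evalP S F
  | .cyl i E => {t | (∀ k, t k ∈ S.carrier) ∧
      ∃ x ∈ S.carrier, Function.update t i x ∈ evalP S E}
  | .icyl i E => {t | (∀ k, t k ∈ S.carrier) ∧
      ∀ x ∈ S.carrier, Function.update t i x ∈ evalP S E}

/-- A possible-world homomorphism: a map on D ∪ N that is the identity on the
constants D. -/
def IsPWHom {D N : Type} (h : D ⊕ N → D ⊕ N) : Prop :=
  ∀ d : D, h (Sum.inl d) = Sum.inl d

/-- `C →_h D`: `h` maps the universe of `C` onto the universe of `D` (hence the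
diagonal of `C` onto the diagonal of `D`) and each cylinder of `C` into the
corresponding cylinder of `D`. -/
def HomTo {D N : Type} {m n : ℕ} (h : D ⊕ N → D ⊕ N)
    (S T : NaiveSeq D N m n) : Prop :=
  h '' S.carrier = T.carrier ∧ ∀ p, (fun t => h ∘ t) '' S.rel p ⊆ T.rel p

/-!
Induction on the expression, since `h ∘ ·` commutes with updating a coordinate. Outer
cylindrification only needs `h` to map the universe of `C` into that of `D`; inner
cylindrification is where surjectivity onto the universe of `D` enters: every value `y`
the coordinate ranges over in `D` is `h x` for some `x` in the universe of `C`.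
-/

namespace HomTo

variable {D N : Type} {m n : ℕ} {h : D ⊕ N → D ⊕ N} {S T : NaiveSeq D N m n}

theorem mapsTo_carrier (hST : HomTo h S T) : Set.MapsTo h S.carrier T.carrier :=
  hST.1 ▸ Set.mapsTo_image h S.carrier

theorem surjOn_carrier (hST : HomTo h S T) : Set.SurjOn h S.carrier T.carrier :=
  hST.1.superset

theorem comp_mem_carrier (hST : HomTo h S T) {t : Fin n → D ⊕ N}
    (ht : ∀ k, t k ∈ S.carrier) (k : Fin n) : (h ∘ t) k ∈ T.carrier :=
  hST.mapsTo_carrier (ht k)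

theorem mapsTo_evalP (hST : HomTo h S T) (E : PExpr m n) :
    Set.MapsTo (h ∘ ·) (evalP S E) (evalP T E) := by
  induction E with
  | base p => exact fun t ht => hST.2 p ⟨t, ht, rfl⟩
  | diag i j =>
    rintro t ⟨ht, hij⟩
    exact ⟨hST.comp_mem_carrier ht, congrArg h hij⟩
  | union E F ihE ihF => exact ihE.union_union ihF
  | inter E F ihE ihF => exact ihE.inter_inter ihF
  | cyl i E ihE =>
    rintro t ⟨ht, x, hx, hup⟩
    refine ⟨hST.comp_mem_carrier ht, h x, hST.mapsTo_carrier hx, ?_⟩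
    simpa only [Function.comp_update] using ihE hup
  | icyl i E ihE =>
    rintro t ⟨ht, hall⟩
    refine ⟨hST.comp_mem_carrier ht, fun y hy => ?_⟩
    obtain ⟨x, hx, rfl⟩ := hST.surjOn_carrier hy
    simpa only [Function.comp_update] using ihE (hall x hx)

end HomTo

theorem pexpr_preserved_general (D N : Type) (m n : ℕ)
    (S T : NaiveSeq D N m n) (h : D ⊕ N → D ⊕ N)
    (hST : HomTo h S T) (E : PExpr m n) :
    (fun t => h ∘ t) '' evalP S E ⊆ evalP T E :=
  (hST.mapsTo_evalP E).image_subset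

/-- Positive cylindric set algebra expressions are preserved by
possible-world homomorphisms: if C →_h D then E(C) →_h E(D), i.e.
h(E(C)) ⊆ E(D). -/
theorem pexpr_preserved (D N : Type) [Countable D] [Infinite D]
    [Countable N] [Infinite N] (m n : ℕ)
    (S T : NaiveSeq D N m n) (h : D ⊕ N → D ⊕ N)
    (hhom : IsPWHom h) (hST : HomTo h S T) (E : PExpr m n) :
    (fun t => h ∘ t) '' evalP S E ⊆ evalP T E :=
  pexpr_preserved_general D N m n S T h hST E
end
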